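/- Let α0,α1,α2,α3,α4 be complex numbers with α0+α1+2α2+2α3+2α4=1, and let (x,y,z,w) be a solution of the Sasano system B4(α0,α1,α2,α3,α4) on an annulus {|t|>R} such that z has a pole of order exactly one at t=∞ and x, y, w are holomorphic at t=∞. Then α4 ≠ 0 and, as t→∞: x(t) → α0−α1 with t·(x(t)−(α0−α1)) → −2α4·(2α2+2α3+2α4)·(2α3+2α4); y(t) → 1/2 with t·(y(t)−1/2) → 2α4·(α3+α4); z(t)/t → 1/(2α4); and w(t) → 0 with t·w(t) → −2α4·(α3+α4). -/

import Mathlib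

open Filter Topology Polynomial

noncomputable section

/-- The four equations of the Sasano system of type `B₄⁽¹⁾` at the point `t`. -/
def B4Eqs (a0 a1 a2 a3 a4 : ℂ) (x y z w : ℂ → ℂ) (t : ℂ) : Prop :=
  (t * deriv x t =
      2 * x t ^ 2 * y t - x t ^ 2 + (1 - 2*a2 - 2*a3 - 2*a4) * x t
        + 2 * a3 * z t + 2 * z t ^ 2 * w t + t) ∧
  (t * deriv y t =
      -2 * x t * y t ^ 2 + 2 * x t * y t - (1 - 2*a2 - 2*a3 - 2*a4) * y t + a1) ∧
  (t * deriv z t =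
      2 * z t ^ 2 * w t - z t ^ 2 + (1 - 2*a4) * z t + 2 * y t * z t ^ 2 + t) ∧
  (t * deriv w t =
      -2 * z t * w t ^ 2 + 2 * z t * w t - (1 - 2*a4) * w t
        - 2 * a3 * y t - 4 * y t * z t * w t + a3)

/-- `(x,y,z,w)` is a holomorphic solution of the Sasano system `B₄⁽¹⁾` on the set `s`. -/
def SolvesB4On (a0 a1 a2 a3 a4 : ℂ) (x y z w : ℂ → ℂ) (s : Set ℂ) : Prop :=
  ∀ t ∈ s, DifferentiableAt ℂ x t ∧ DifferentiableAt ℂ y t ∧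
    DifferentiableAt ℂ z t ∧ DifferentiableAt ℂ w t ∧ B4Eqs a0 a1 a2 a3 a4 x y z w t

/-- The filter of neighbourhoods of `t = ∞` in `ℂ`. -/
def atInfty : Filter ℂ := Filter.comap (fun t : ℂ => ‖t‖) Filter.atTop

/-- `f` is holomorphic at `t = ∞`: `f(t)` has a finite limit as `t → ∞`. -/
def HoloAtInfty (f : ℂ → ℂ) : Prop := ∃ L : ℂ, Tendsto f atInfty (𝓝 L)

/-- `f` has a pole of order `n ≥ 1` at `t = ∞`: `t⁻ⁿ·f(t)` has a finite nonzero limit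
as `t → ∞`. -/
def PoleAtInftyOfOrder (f : ℂ → ℂ) (n : ℕ) : Prop :=
  ∃ L : ℂ, L ≠ 0 ∧ Tendsto (fun t => f t / t ^ n) atInfty (𝓝 L)

/-!
In the coordinate `s = 1 / t`, the functions `x`, `y`, `w` and `z / t` are holomorphic on a
punctured disc and have limits at `s = 0`, so by Riemann's removable singularity theorem each has
an expansion `L + L₁ / t + o(1 / t)` at `t = ∞` whose derivative is `-L₁ / t² + o(1 / t²)`.
Substituting these expansions into the four equations, rescaled by suitable powers of `t`, and
letting `t → ∞` gives polynomial relations between the coefficients. At leading order they force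
`w → 0`, `y → 1/2` and `x → α₀ - α₁` (this uses that the pole coefficient `C` of `z` is nonzero);
at the next order the `x`- and `z`-equations give `C y₁ = α₃ + α₄`, the `w`-equation then gives
`C w₁ = -(α₃ + α₄)`, whence `2 α₄ C = 1`, and the `y`-equation determines `x₁`.
-/

open Bornology Function

lemma atInfty_eq_cobounded : atInfty = cobounded ℂ := comap_norm_atTop

section RemovableSingularityAtInfinity

variable {E : Type*} [NormedAddCommGroup E] [NormedSpace ℂ E] [CompleteSpace E]
  {f : ℂ → E} {L : E}

theorem analyticAt_update_comp_inv_of_tendsto_cobounded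
    (hf : ∀ᶠ t in cobounded ℂ, DifferentiableAt ℂ f t) (hL : Tendsto f (cobounded ℂ) (𝓝 L)) :
    AnalyticAt ℂ (update (fun s => f s⁻¹) 0 L) 0 := by
  refine Complex.analyticAt_of_differentiable_on_punctured_nhds_of_continuousAt ?_
    (continuousAt_update_same.2 (hL.comp tendsto_inv₀_nhdsNE_zero))
  filter_upwards [tendsto_inv₀_nhdsNE_zero.eventually hf, self_mem_nhdsWithin] with s hs hs0
  refine ((hs.comp s (differentiableAt_inv hs0)).congr_of_eventuallyEq ?_)
  filter_upwards [isOpen_ne.mem_nhds hs0] with r hr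
  exact update_of_ne hr _ _

theorem exists_tendsto_smul_sub_and_sq_smul_deriv_of_tendsto_cobounded
    (hf : ∀ᶠ t in cobounded ℂ, DifferentiableAt ℂ f t) (hL : Tendsto f (cobounded ℂ) (𝓝 L)) :
    ∃ L₁ : E, Tendsto (fun t => t • (f t - L)) (cobounded ℂ) (𝓝 L₁) ∧
      Tendsto (fun t => t ^ 2 • deriv f t) (cobounded ℂ) (𝓝 (-L₁)) := by
  set g := update (fun s => f s⁻¹) 0 L
  have hg := analyticAt_update_comp_inv_of_tendsto_cobounded hf hL
  have hg_inv : ∀ t : ℂ, t ≠ 0 → g t⁻¹ = f t := fun t ht => by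
    simp [g, update_of_ne (inv_ne_zero ht)]
  refine ⟨deriv g 0, ?_, ?_⟩
  · refine ((hasDerivAt_iff_tendsto_slope.1 hg.differentiableAt.hasDerivAt).comp
      tendsto_inv₀_cobounded').congr' ?_
    filter_upwards [eventually_ne_cobounded 0] with t ht
    simp [slope_def_module, hg_inv t ht, g]
  · have hderiv : Tendsto (fun t : ℂ => deriv g t⁻¹) (cobounded ℂ) (𝓝 (deriv g 0)) :=
      hg.deriv.continuousAt.tendsto.comp tendsto_inv₀_cobounded
    refine hderiv.neg.congr' ?_
    filter_upwards [eventually_ne_cobounded 0,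
      tendsto_inv₀_cobounded.eventually hg.eventually_analyticAt] with t ht hgt
    have hfg : f =ᶠ[𝓝 t] fun s => g s⁻¹ := by
      filter_upwards [isOpen_ne.mem_nhds ht] with s hs
      exact (hg_inv s hs).symm
    have hcomp : HasDerivAt (fun s => g s⁻¹) ((-(t ^ 2)⁻¹) • deriv g t⁻¹) t :=
      hgt.differentiableAt.hasDerivAt.scomp t (hasDerivAt_inv ht)
    rw [hfg.deriv_eq, hcomp.deriv, smul_smul]
    simp [ht]

end RemovableSingularityAtInfinity

theorem tendsto_zero_of_tendsto_smul_cobounded {𝕜 E : Type*} [NontriviallyNormedField 𝕜]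
    [NormedAddCommGroup E] [NormedSpace 𝕜 E] {u : 𝕜 → E} {M : E}
    (h : Tendsto (fun t => t • u t) (cobounded 𝕜) (𝓝 M)) : Tendsto u (cobounded 𝕜) (𝓝 0) := by
  refine (zero_smul 𝕜 M ▸ tendsto_inv₀_cobounded.smul h).congr' ?_
  filter_upwards [eventually_ne_cobounded 0] with t ht
  simp [smul_smul, ht]

theorem tendsto_smul_zero_of_tendsto_sq_smul_cobounded {𝕜 E : Type*} [NontriviallyNormedField 𝕜]
    [NormedAddCommGroup E] [NormedSpace 𝕜 E] {u : 𝕜 → E} {M : E}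
    (h : Tendsto (fun t => t ^ 2 • u t) (cobounded 𝕜) (𝓝 M)) :
    Tendsto (fun t => t • u t) (cobounded 𝕜) (𝓝 0) :=
  tendsto_zero_of_tendsto_smul_cobounded (h.congr fun t => by rw [pow_two, mul_smul])

theorem tendsto_deriv_of_tendsto_div_self {z : ℂ → ℂ} {C : ℂ}
    (hz : ∀ᶠ t in cobounded ℂ, DifferentiableAt ℂ z t)
    (hC : Tendsto (fun t => z t / t) (cobounded ℂ) (𝓝 C)) :
    Tendsto (deriv z) (cobounded ℂ) (𝓝 C) := by
  set ζ : ℂ → ℂ := fun t => z t / t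
  have hζ : ∀ᶠ t in cobounded ℂ, DifferentiableAt ℂ ζ t := by
    filter_upwards [hz, eventually_ne_cobounded 0] with t hzt ht
    exact hzt.div differentiableAt_id ht
  obtain ⟨_, -, hζ'⟩ := exists_tendsto_smul_sub_and_sq_smul_deriv_of_tendsto_cobounded hζ hC
  refine (add_zero C ▸ hC.add (tendsto_smul_zero_of_tendsto_sq_smul_cobounded hζ')).congr' ?_
  filter_upwards [hζ, eventually_ne_cobounded 0] with t hζt ht
  have hzζ : z =ᶠ[𝓝 t] fun s => s * ζ s := by
    filter_upwards [isOpen_ne.mem_nhds ht] with s hs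
    simp [ζ, mul_div_cancel₀ _ hs]
  rw [hzζ.deriv_eq, ((hasDerivAt_id' t).fun_mul hζt.hasDerivAt).deriv, one_mul, smul_eq_mul]

section LimitBalances

variable {a0 a1 a2 a3 a4 X Y W C x₁ y₁ w₁ : ℂ} {x y z w : ℂ → ℂ}

theorem B4_y_balance_leading (hEq : ∀ᶠ t in cobounded ℂ, B4Eqs a0 a1 a2 a3 a4 x y z w t)
    (hX : Tendsto x (cobounded ℂ) (𝓝 X)) (hY : Tendsto y (cobounded ℂ) (𝓝 Y))
    (hy' : Tendsto (fun t => t * deriv y t) (cobounded ℂ) (𝓝 0)) :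
    -2 * X * Y ^ 2 + 2 * X * Y - (1 - 2*a2 - 2*a3 - 2*a4) * Y + a1 = 0 :=
  tendsto_nhds_unique_of_eventuallyEq
    (((((hX.const_mul (-2)).mul (hY.pow 2)).add ((hX.const_mul 2).mul hY)).sub
      (hY.const_mul _)).add_const a1) hy' (hEq.mono fun _ ht => ht.2.1.symm)

theorem B4_z_balance_leading (hEq : ∀ᶠ t in cobounded ℂ, B4Eqs a0 a1 a2 a3 a4 x y z w t)
    (hY : Tendsto y (cobounded ℂ) (𝓝 Y)) (hW : Tendsto w (cobounded ℂ) (𝓝 W))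
    (hζ : Tendsto (fun t => z t / t) (cobounded ℂ) (𝓝 C))
    (hz' : Tendsto (deriv z) (cobounded ℂ) (𝓝 C)) :
    C ^ 2 * (2 * W + 2 * Y - 1) = 0 := by
  have hlim := tendsto_nhds_unique_of_eventuallyEq
    (((((hζ.pow 2).const_mul 2).mul hW).add (((hY.const_mul 2).sub_const 1).mul (hζ.pow 2))).add
      (((hζ.const_mul (1 - 2*a4)).mul tendsto_inv₀_cobounded).add tendsto_inv₀_cobounded))
    (hz'.mul tendsto_inv₀_cobounded) (by
      filter_upwards [hEq, eventually_ne_cobounded 0] with t ht ht0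
      field_simp
      linear_combination -ht.2.2.1)
  linear_combination hlim

theorem B4_w_balance_leading (hEq : ∀ᶠ t in cobounded ℂ, B4Eqs a0 a1 a2 a3 a4 x y z w t)
    (hY : Tendsto y (cobounded ℂ) (𝓝 Y)) (hW : Tendsto w (cobounded ℂ) (𝓝 W))
    (hζ : Tendsto (fun t => z t / t) (cobounded ℂ) (𝓝 C))
    (hw' : Tendsto (deriv w) (cobounded ℂ) (𝓝 0)) :
    C * W * (-2 * W + 2 - 4 * Y) = 0 := by
  have hlim := tendsto_nhds_unique_of_eventuallyEq
    (((hζ.mul hW).mul (((hW.const_mul (-2)).add_const 2).sub (hY.const_mul 4))).add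
      ((((hW.const_mul (-(1 - 2*a4))).sub (hY.const_mul (2*a3))).add_const a3).mul
        tendsto_inv₀_cobounded))
    hw' (by
      filter_upwards [hEq, eventually_ne_cobounded 0] with t ht ht0
      field_simp
      linear_combination -ht.2.2.2)
  linear_combination hlim

theorem B4_x_balance_first (hEq : ∀ᶠ t in cobounded ℂ, B4Eqs a0 a1 a2 a3 a4 x y z w t)
    (hX : Tendsto x (cobounded ℂ) (𝓝 X)) (hY : Tendsto y (cobounded ℂ) (𝓝 Y))
    (hζ : Tendsto (fun t => z t / t) (cobounded ℂ) (𝓝 C))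
    (hw₁ : Tendsto (fun t => t * w t) (cobounded ℂ) (𝓝 w₁))
    (hx' : Tendsto (deriv x) (cobounded ℂ) (𝓝 0)) :
    2 * a3 * C + 2 * C ^ 2 * w₁ + 1 = 0 := by
  have hlim := tendsto_nhds_unique_of_eventuallyEq
    ((((((((hX.pow 2).const_mul 2).mul hY).sub (hX.pow 2)).add
      (hX.const_mul (1 - 2*a2 - 2*a3 - 2*a4))).mul tendsto_inv₀_cobounded).add
      ((hζ.const_mul (2*a3)).add (((hζ.pow 2).const_mul 2).mul hw₁))).add_const 1)
    hx' (by
      filter_upwards [hEq, eventually_ne_cobounded 0] with t ht ht0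
      field_simp
      linear_combination -ht.1)
  linear_combination hlim

theorem B4_z_balance_first (hEq : ∀ᶠ t in cobounded ℂ, B4Eqs a0 a1 a2 a3 a4 x y z w t)
    (hζ : Tendsto (fun t => z t / t) (cobounded ℂ) (𝓝 C))
    (hy₁ : Tendsto (fun t => t * (y t - 1/2)) (cobounded ℂ) (𝓝 y₁))
    (hw₁ : Tendsto (fun t => t * w t) (cobounded ℂ) (𝓝 w₁))
    (hz' : Tendsto (deriv z) (cobounded ℂ) (𝓝 C)) :
    2 * C ^ 2 * w₁ + 2 * C ^ 2 * y₁ + (1 - 2*a4) * C + 1 = C := by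
  refine tendsto_nhds_unique_of_eventuallyEq
    ((((((hζ.pow 2).const_mul 2).mul hw₁).add (((hζ.pow 2).const_mul 2).mul hy₁)).add
      (hζ.const_mul (1 - 2*a4))).add_const 1) hz' ?_
  filter_upwards [hEq, eventually_ne_cobounded 0] with t ht ht0
  field_simp
  linear_combination -ht.2.2.1

theorem B4_w_balance_first (hEq : ∀ᶠ t in cobounded ℂ, B4Eqs a0 a1 a2 a3 a4 x y z w t)
    (hζ : Tendsto (fun t => z t / t) (cobounded ℂ) (𝓝 C))
    (hy₁ : Tendsto (fun t => t * (y t - 1/2)) (cobounded ℂ) (𝓝 y₁))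
    (hw₁ : Tendsto (fun t => t * w t) (cobounded ℂ) (𝓝 w₁))
    (hw'' : Tendsto (fun t => t ^ 2 * deriv w t) (cobounded ℂ) (𝓝 (-w₁))) :
    C * w₁ * (-2 * w₁ - 4 * y₁) - (1 - 2*a4) * w₁ - 2 * a3 * y₁ = -w₁ := by
  refine tendsto_nhds_unique_of_eventuallyEq
    ((((hζ.mul hw₁).mul ((hw₁.const_mul (-2)).sub (hy₁.const_mul 4))).sub
      (hw₁.const_mul (1 - 2*a4))).sub (hy₁.const_mul (2*a3))) hw'' ?_
  filter_upwards [hEq, eventually_ne_cobounded 0] with t ht ht0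
  field_simp
  linear_combination -2 * ht.2.2.2

theorem B4_y_balance_first (hsum : a0 + a1 + 2*a2 + 2*a3 + 2*a4 = 1)
    (hEq : ∀ᶠ t in cobounded ℂ, B4Eqs a0 a1 a2 a3 a4 x y z w t)
    (hY : Tendsto y (cobounded ℂ) (𝓝 (1/2)))
    (hx₁ : Tendsto (fun t => t * (x t - (a0 - a1))) (cobounded ℂ) (𝓝 x₁))
    (hy₁ : Tendsto (fun t => t * (y t - 1/2)) (cobounded ℂ) (𝓝 y₁))
    (hy'' : Tendsto (fun t => t ^ 2 * deriv y t) (cobounded ℂ) (𝓝 (-y₁))) :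
    x₁ / 2 - (1 - 2*a2 - 2*a3 - 2*a4) * y₁ = -y₁ := by
  have hlim := tendsto_nhds_unique_of_eventuallyEq
    (((((hx₁.mul (hY.pow 2)).add (((hY.add_const (1/2)).const_mul (a0 - a1)).mul hy₁)).const_mul
      (-2)).add (((hx₁.mul hY).add (hy₁.const_mul (a0 - a1))).const_mul 2)).sub
      (hy₁.const_mul (1 - 2*a2 - 2*a3 - 2*a4))) hy'' (by
      filter_upwards [hEq] with t ht
      linear_combination -t * ht.2.1 - t / 2 * hsum)
  linear_combination hlim

end LimitBalances

section AlgebraicSystem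

variable {a0 a1 a2 a3 a4 X Y W C x₁ y₁ w₁ : ℂ}

theorem B4_leading_coefficients (hsum : a0 + a1 + 2*a2 + 2*a3 + 2*a4 = 1) (hC : C ≠ 0)
    (hy : -2 * X * Y ^ 2 + 2 * X * Y - (1 - 2*a2 - 2*a3 - 2*a4) * Y + a1 = 0)
    (hz : C ^ 2 * (2 * W + 2 * Y - 1) = 0) (hw : C * W * (-2 * W + 2 - 4 * Y) = 0) :
    W = 0 ∧ Y = 1/2 ∧ X = a0 - a1 := by
  have hWY : 2 * W + 2 * Y - 1 = 0 := (mul_eq_zero.1 hz).resolve_left (pow_ne_zero 2 hC)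
  have hW : W = 0 := by
    have h : (2 * C) * W ^ 2 = 0 := by linear_combination hw + 2 * C * W * hWY
    exact pow_eq_zero_iff two_ne_zero |>.1 <|
      (mul_eq_zero.1 h).resolve_left (mul_ne_zero two_ne_zero hC)
  have hY : Y = 1/2 := by linear_combination hWY / 2 - hW
  subst hY
  exact ⟨hW, rfl, by linear_combination 2 * hy - hsum⟩

theorem B4_first_order_coefficients (hC : C ≠ 0)
    (hx : 2 * a3 * C + 2 * C ^ 2 * w₁ + 1 = 0)
    (hz : 2 * C ^ 2 * w₁ + 2 * C ^ 2 * y₁ + (1 - 2*a4) * C + 1 = C)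
    (hw : C * w₁ * (-2 * w₁ - 4 * y₁) - (1 - 2*a4) * w₁ - 2 * a3 * y₁ = -w₁)
    (hy : x₁ / 2 - (1 - 2*a2 - 2*a3 - 2*a4) * y₁ = -y₁) :
    a4 ≠ 0 ∧ C = 1/(2*a4) ∧ x₁ = -2*a4 * (2*a2 + 2*a3 + 2*a4) * (2*a3 + 2*a4) ∧
      y₁ = 2*a4*(a3 + a4) ∧ w₁ = -2*a4*(a3 + a4) := by
  have hCy : C * y₁ = a3 + a4 :=
    mul_left_cancel₀ hC (by linear_combination (hz - hx) / 2)
  have hCw : C * w₁ + a3 + a4 = 0 := by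
    have h : (C * w₁ + a3) * (C * w₁ + a3 + a4) = 0 := by
      linear_combination (-C/2) * hw - (2 * C * w₁ + a3) * hCy
    refine (mul_eq_zero.1 h).resolve_left fun h' => one_ne_zero (α := ℂ) ?_
    linear_combination hx - 2 * C * h'
  have hCa4 : 2 * C * a4 = 1 := by linear_combination 2 * C * hCw - hx
  have ha4 : a4 ≠ 0 := by rintro rfl; simp at hCa4
  have hy₁ : y₁ = 2*a4*(a3 + a4) := by linear_combination 2*a4*hCy - y₁*hCa4
  refine ⟨ha4, ?_, by linear_combination 2*hy - 2*(2*a2+2*a3+2*a4)*hy₁, hy₁,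
    by linear_combination 2*a4*hCw - w₁*hCa4⟩
  rw [eq_div_iff (mul_ne_zero two_ne_zero ha4)]
  linear_combination hCa4

end AlgebraicSystem

/-- Asymptotics at `t = ∞` of a solution of the Sasano system `B₄⁽¹⁾` for which `z` has a
pole of order exactly one at `t = ∞` and `x, y, w` are holomorphic at `t = ∞`. -/
theorem B4_pole_order_one_asymptotics (a0 a1 a2 a3 a4 : ℂ)
    (hsum : a0 + a1 + 2*a2 + 2*a3 + 2*a4 = 1) (R : ℝ) (x y z w : ℂ → ℂ)
    (hsol : SolvesB4On a0 a1 a2 a3 a4 x y z w {t : ℂ | R < ‖t‖})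
    (hz : PoleAtInftyOfOrder z 1)
    (hx : HoloAtInfty x) (hy : HoloAtInfty y) (hw : HoloAtInfty w) :
    a4 ≠ 0 ∧
    Tendsto x atInfty (𝓝 (a0 - a1)) ∧
    Tendsto (fun t => t * (x t - (a0 - a1))) atInfty
      (𝓝 (-2*a4 * (2*a2 + 2*a3 + 2*a4) * (2*a3 + 2*a4))) ∧
    Tendsto y atInfty (𝓝 (1/2)) ∧
    Tendsto (fun t => t * (y t - 1/2)) atInfty (𝓝 (2*a4*(a3 + a4))) ∧
    Tendsto (fun t => z t / t) atInfty (𝓝 (1/(2*a4))) ∧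
    Tendsto w atInfty (𝓝 0) ∧
    Tendsto (fun t => t * w t) atInfty (𝓝 (-2*a4*(a3 + a4))) := by
  simp only [HoloAtInfty, PoleAtInftyOfOrder, atInfty_eq_cobounded, pow_one] at hz hx hy hw ⊢
  obtain ⟨C, hC, hζ⟩ := hz
  obtain ⟨X, hX⟩ := hx
  obtain ⟨Y, hY⟩ := hy
  obtain ⟨W, hW⟩ := hw
  have hsol' := (tendsto_norm_cobounded_atTop.eventually_gt_atTop R).mono hsol
  have hEq : ∀ᶠ t in cobounded ℂ, B4Eqs a0 a1 a2 a3 a4 x y z w t :=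
    hsol'.mono fun _ h => h.2.2.2.2
  obtain ⟨x₁, hx₁, hx''⟩ := exists_tendsto_smul_sub_and_sq_smul_deriv_of_tendsto_cobounded
    (hsol'.mono fun _ h => h.1) hX
  obtain ⟨y₁, hy₁, hy''⟩ := exists_tendsto_smul_sub_and_sq_smul_deriv_of_tendsto_cobounded
    (hsol'.mono fun _ h => h.2.1) hY
  obtain ⟨w₁, hw₁, hw''⟩ := exists_tendsto_smul_sub_and_sq_smul_deriv_of_tendsto_cobounded
    (hsol'.mono fun _ h => h.2.2.2.1) hW
  have hz' := tendsto_deriv_of_tendsto_div_self (hsol'.mono fun _ h => h.2.2.1) hζ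
  have hx' := tendsto_zero_of_tendsto_smul_cobounded
    (tendsto_smul_zero_of_tendsto_sq_smul_cobounded hx'')
  have hy' := tendsto_smul_zero_of_tendsto_sq_smul_cobounded hy''
  have hw' := tendsto_zero_of_tendsto_smul_cobounded
    (tendsto_smul_zero_of_tendsto_sq_smul_cobounded hw'')
  obtain ⟨rfl, rfl, rfl⟩ := B4_leading_coefficients hsum hC
    (B4_y_balance_leading hEq hX hY hy') (B4_z_balance_leading hEq hY hW hζ hz')
    (B4_w_balance_leading hEq hY hW hζ hw')
  simp only [smul_eq_mul, sub_zero] at hx₁ hy₁ hw₁ hy'' hw''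
  obtain ⟨ha4, rfl, rfl, rfl, rfl⟩ := B4_first_order_coefficients hC
    (B4_x_balance_first hEq hX hY hζ hw₁ hx') (B4_z_balance_first hEq hζ hy₁ hw₁ hz') (B4_w_balance_first hEq hζ hy₁ hw₁ hw'')
    (B4_y_balance_first hsum hEq hY hx₁ hy₁ hy'')
  exact ⟨ha4, hX, hx₁, hY, hy₁, hζ, hW, hw₁⟩
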